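/- Let X be a finite set with |X| ≥ 2, φ a finite-state automorphism of the rooted tree X*, and μ the Bernoulli measure on X^ℕ. For k ≥ 0 let P_k = { w ∈ X^k : φ(w) = w, φ|_w ≠ id } and F_k = ⋃_{w ∈ P_k} wX^ℕ. Then the sequence (F_k) is decreasing, and Fix_φ \ interior(Fix_φ) = ⋂_k F_k; consequently μ(Fix_φ \ interior(Fix_φ)) = lim_{k→∞} |P_k| / |X|^k. -/

import Mathlib

/-- An automorphism of the rooted tree `X*` of finite words over `X`: a bijection of
`List X` preserving lengths and prefixes. -/
structure TreeAut (X : Type*) where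
  toFun : List X → List X
  invFun : List X → List X
  left_inv : Function.LeftInverse invFun toFun
  right_inv : Function.RightInverse invFun toFun
  length_eq : ∀ w : List X, (toFun w).length = w.length
  take_append : ∀ w v : List X, (toFun (w ++ v)).take w.length = toFun w

/-- The restriction (section) `φ|_w` of a tree automorphism `φ` at the word `w`,
characterised by `φ(w v) = φ(w) φ|_w(v)`. -/
def TreeAut.restrict {X : Type*} (φ : TreeAut X) (w : List X) : List X → List X :=
  fun v => (φ.toFun (w ++ v)).drop w.length

/-- The set `P_k` of words of length `k` fixed by `φ` whose restriction is nontrivial. -/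
def TreeAut.badWords {X : Type*} (φ : TreeAut X) (k : ℕ) : Set (List X) :=
  {w : List X | w.length = k ∧ φ.toFun w = w ∧ φ.restrict w ≠ id}

open MeasureTheory
open scoped ENNReal

/-- The prefix of length `n` of a sequence `x : ℕ → X`, as a word. -/
def prefixWord {X : Type*} (x : ℕ → X) (n : ℕ) : List X :=
  List.ofFn (fun i : Fin n => x i)

/-- The cylinder set of sequences beginning with the word `w`. -/
def cylinder {X : Type*} (w : List X) : Set (ℕ → X) :=
  {x : ℕ → X | prefixWord x w.length = w}

/-- The homeomorphism of `X^ℕ` induced by a tree automorphism `φ`: the `n`-th letter of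
`φ(x)` is the `n`-th letter of `φ` applied to the prefix of `x` of length `n + 1`. -/
def TreeAut.seqAct {X : Type*} (φ : TreeAut X) (x : ℕ → X) : ℕ → X :=
  fun n => (φ.toFun (prefixWord x (n + 1))).getD n (x n)

/-- The fixed-point set in `X^ℕ` of the homeomorphism induced by `φ`. -/
def TreeAut.fixSeq {X : Type*} (φ : TreeAut X) : Set (ℕ → X) :=
  {x : ℕ → X | φ.seqAct x = x}

open Filter

/-- The set `F_k = ⋃_{w ∈ P_k} w X^ℕ`. -/
def TreeAut.badCylinders {X : Type*} (φ : TreeAut X) (k : ℕ) : Set (ℕ → X) :=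
  ⋃ w ∈ φ.badWords k, cylinder w


/-!
A fixed point `x` of `φ` is an interior point of `Fix_φ` iff some prefix cylinder `wX^ℕ` of `x`
lies in `Fix_φ`, i.e. iff `φ` fixes some prefix `w` of `x` with `φ|_w = id`; so the boundary
points are exactly those all of whose prefixes lie in the sets `P_k`. Each `F_k` is a union of
cylinders of length `k`, whose complement is the union of the remaining ones; comparing the two
upper bounds `|P_k| / |X|^k` and `1 - |P_k| / |X|^k` shows that `μ` is additive on `F_k`, so `F_k`
is null-measurable with measure `|P_k| / |X|^k`, and continuity from above gives the limit.
-/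

open Set

section PiNat

variable {E : ℕ → Type*} [∀ n, TopologicalSpace (E n)] [∀ n, DiscreteTopology (E n)]

theorem PiNat.mem_interior_iff_exists_cylinder_subset {s : Set (∀ n, E n)} {x : ∀ n, E n} :
    x ∈ interior s ↔ ∃ n, PiNat.cylinder x n ⊆ s := by
  rw [mem_interior_iff_mem_nhds, (PiNat.isTopologicalBasis_cylinders E).mem_nhds_iff]
  constructor
  · rintro ⟨_, ⟨y, n, rfl⟩, hx, hs⟩
    exact ⟨n, PiNat.mem_cylinder_iff_eq.mp hx ▸ hs⟩
  · rintro ⟨n, hs⟩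
    exact ⟨_, ⟨x, n, rfl⟩, PiNat.self_mem_cylinder x n, hs⟩

end PiNat

section NullMeasurable

open MeasureTheory

variable {α : Type*} [MeasurableSpace α] {μ : Measure α}

theorem MeasureTheory.nullMeasurableSet_of_measure_add_measure_compl_le [IsFiniteMeasure μ]
    {s : Set α} (h : μ s + μ sᶜ ≤ μ univ) : NullMeasurableSet s μ := by
  set t := toMeasurable μ s
  have hst : s ⊆ t := subset_toMeasurable μ s
  have ht : MeasurableSet t := measurableSet_toMeasurable μ s
  have hsplit : μ (sᶜ ∩ t) + μ tᶜ = μ sᶜ := by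
    rw [← measure_inter_add_sdiff sᶜ ht, sdiff_eq, ← compl_union, union_eq_right.mpr hst]
  have hnull : μ (t \ s) = 0 := by
    have hle : μ s + (μ (sᶜ ∩ t) + μ tᶜ) ≤ μ s + (0 + μ tᶜ) := by
      rw [hsplit, zero_add, ← measure_toMeasurable s, measure_add_measure_compl ht]
      rwa [measure_toMeasurable]
    have := (ENNReal.add_le_add_iff_right (measure_ne_top μ tᶜ)).mp
      ((ENNReal.add_le_add_iff_left (measure_ne_top μ s)).mp hle)
    rwa [nonpos_iff_eq_zero, inter_comm, ← sdiff_eq] at this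
  exact ht.nullMeasurableSet.congr
    (ae_eq_set.mpr ⟨hnull, by rw [sdiff_eq_empty.mpr hst, measure_empty]⟩)

end NullMeasurable

section Words

variable {X : Type*}

@[simp]
theorem length_prefixWord (x : ℕ → X) (n : ℕ) : (prefixWord x n).length = n := by
  simp [prefixWord]

theorem prefixWord_succ (x : ℕ → X) (n : ℕ) :
    prefixWord x (n + 1) = prefixWord x n ++ [x n] := by
  simp only [prefixWord, List.ofFn_succ_last, Fin.val_castSucc, Fin.val_last]

@[simp]
theorem getElem_prefixWord (x : ℕ → X) (n i : ℕ) (h : i < (prefixWord x n).length) :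
    (prefixWord x n)[i] = x i := by
  simp [prefixWord]

theorem take_prefixWord (x : ℕ → X) {m n : ℕ} (h : m ≤ n) :
    (prefixWord x n).take m = prefixWord x m := by
  apply List.ext_getElem (by simp [h])
  intro i _ _
  simp [prefixWord]

theorem eq_of_forall_prefixWord_eq {x y : ℕ → X} (h : ∀ n, prefixWord x n = prefixWord y n) :
    x = y := by
  funext n
  simpa [prefixWord] using congrFun (List.ofFn_inj.mp (h (n + 1))) (Fin.last n)

theorem exists_prefixWord_eq [Nonempty X] (w : List X) : ∃ x : ℕ → X, prefixWord x w.length = w :=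
  ⟨fun n => w.getD n (Classical.arbitrary X),
    List.ext_getElem (by simp) fun _ _ _ => by simp [prefixWord]⟩

theorem mem_cylinder_iff_prefixWord_eq {w : List X} {x : ℕ → X} :
    x ∈ cylinder w ↔ prefixWord x w.length = w :=
  Iff.rfl

theorem cylinder_prefixWord (x : ℕ → X) (n : ℕ) :
    cylinder (prefixWord x n) = PiNat.cylinder x n := by
  ext y
  rw [PiNat.mem_cylinder_iff, mem_cylinder_iff_prefixWord_eq, length_prefixWord]
  simp [prefixWord, List.ofFn_inj, funext_iff, Fin.forall_iff]

theorem self_mem_cylinder_prefixWord (x : ℕ → X) (n : ℕ) : x ∈ cylinder (prefixWord x n) := by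
  rw [mem_cylinder_iff_prefixWord_eq, length_prefixWord]

theorem compl_biUnion_cylinder_subset (S : Set (List X)) (k : ℕ) :
    (⋃ w ∈ S, cylinder w)ᶜ ⊆ ⋃ w ∈ {w : List X | w.length = k} \ S, cylinder w := fun x hx =>
  mem_iUnion₂.mpr ⟨prefixWord x k, ⟨length_prefixWord x k,
    fun hS => hx (mem_iUnion₂.mpr ⟨_, hS, self_mem_cylinder_prefixWord x k⟩)⟩,
    self_mem_cylinder_prefixWord x k⟩

theorem ncard_setOf_length_eq [Fintype X] (k : ℕ) :
    {w : List X | w.length = k}.ncard = Fintype.card X ^ k := by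
  rw [← Nat.card_coe_set_eq,
    Nat.card_congr (show {w : List X | w.length = k} ≃ List.Vector X k from Equiv.refl _),
    Nat.card_eq_fintype_card, card_vector]

end Words

namespace TreeAut

variable {X : Type*} (φ : TreeAut X)

theorem toFun_append (w v : List X) : φ.toFun (w ++ v) = φ.toFun w ++ φ.restrict w v := by
  rw [← List.take_append_drop w.length (φ.toFun (w ++ v)), φ.take_append]
  rfl

theorem toFun_take (w : List X) (m : ℕ) : φ.toFun (w.take m) = (φ.toFun w).take m := by
  have h := φ.take_append (w.take m) (w.drop m)
  rw [List.take_append_drop, List.length_take] at h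
  rw [List.take_eq_take_min (l := φ.toFun w), φ.length_eq, h]

theorem prefixWord_seqAct (x : ℕ → X) (n : ℕ) :
    prefixWord (φ.seqAct x) n = φ.toFun (prefixWord x n) := by
  refine List.ext_getElem (by simp [φ.length_eq]) fun i hi _ => ?_
  have hin : i + 1 ≤ n := by simpa using hi
  rw [getElem_prefixWord, seqAct, ← take_prefixWord x hin, toFun_take,
    List.getD_eq_getElem?_getD, List.getElem?_take_of_lt (by omega), List.getElem?_eq_getElem]
  rfl

theorem mem_fixSeq_iff (x : ℕ → X) :
    x ∈ φ.fixSeq ↔ ∀ n, φ.toFun (prefixWord x n) = prefixWord x n := by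
  refine ⟨fun h n => ?_, fun h => eq_of_forall_prefixWord_eq fun n => ?_⟩
  · rw [← φ.prefixWord_seqAct, show φ.seqAct x = x from h]
  · rw [φ.prefixWord_seqAct, h]

theorem forall_toFun_append_eq_self_iff (w : List X) :
    (∀ v, φ.toFun (w ++ v) = w ++ v) ↔ φ.toFun w = w ∧ φ.restrict w = id := by
  refine ⟨fun h => ?_, fun ⟨hw, hr⟩ v => by rw [toFun_append, hw, hr, id]⟩
  have hw : φ.toFun w = w := by simpa using h []
  refine ⟨hw, funext fun v => ?_⟩
  have hv := h v
  rw [toFun_append, hw] at hv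
  exact List.append_cancel_left hv

theorem cylinder_subset_fixSeq_iff [Nonempty X] (w : List X) :
    cylinder w ⊆ φ.fixSeq ↔ φ.toFun w = w ∧ φ.restrict w = id := by
  rw [← forall_toFun_append_eq_self_iff]
  constructor
  · intro h v
    obtain ⟨y, hy⟩ := exists_prefixWord_eq (w ++ v)
    have hyw : y ∈ cylinder w := by
      rw [mem_cylinder_iff_prefixWord_eq, ← take_prefixWord y (n := (w ++ v).length) (by simp),
        hy, List.take_append_length]
    rw [← hy]
    exact (φ.mem_fixSeq_iff y).mp (h hyw) _
  · intro h y hy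
    refine (φ.mem_fixSeq_iff y).mpr fun n => ?_
    have hpre : prefixWord y (w.length + n) = w ++ (prefixWord y (w.length + n)).drop w.length := by
      conv_lhs => rw [← List.take_append_drop w.length (prefixWord y (w.length + n))]
      rw [take_prefixWord y (Nat.le_add_right _ _), mem_cylinder_iff_prefixWord_eq.mp hy]
    rw [← take_prefixWord y (Nat.le_add_left n w.length), toFun_take, hpre, h]

theorem mem_badCylinders_iff (k : ℕ) (x : ℕ → X) :
    x ∈ φ.badCylinders k ↔ prefixWord x k ∈ φ.badWords k := by
  simp only [badCylinders, mem_iUnion₂]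
  refine ⟨?_, fun h => ⟨_, h, self_mem_cylinder_prefixWord x k⟩⟩
  rintro ⟨w, hw, hx⟩
  obtain rfl : w.length = k := hw.1
  rwa [mem_cylinder_iff_prefixWord_eq.mp hx]

theorem badCylinders_succ_subset (k : ℕ) : φ.badCylinders (k + 1) ⊆ φ.badCylinders k := by
  intro x
  simp only [mem_badCylinders_iff]
  rintro ⟨-, hfix, hne⟩
  have hfix' : φ.toFun (prefixWord x k) = prefixWord x k := by
    rw [← take_prefixWord x k.le_succ, toFun_take, hfix]
  refine ⟨length_prefixWord x k, hfix', fun hid => hne ?_⟩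
  have hall := (φ.forall_toFun_append_eq_self_iff _).mpr ⟨hfix', hid⟩
  refine ((φ.forall_toFun_append_eq_self_iff _).mp fun v => ?_).2
  rw [prefixWord_succ, List.append_assoc, hall]

theorem fixSeq_diff_interior [Nonempty X] [TopologicalSpace X] [DiscreteTopology X] :
    φ.fixSeq \ interior φ.fixSeq = ⋂ k, φ.badCylinders k := by
  ext x
  simp only [Set.mem_sdiff, mem_iInter, mem_badCylinders_iff, badWords, Set.mem_ofPred_eq,
    length_prefixWord, true_and, PiNat.mem_interior_iff_exists_cylinder_subset,
    ← cylinder_prefixWord, cylinder_subset_fixSeq_iff, mem_fixSeq_iff, not_exists, not_and]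
  exact ⟨fun ⟨hfix, hne⟩ n => ⟨hfix n, hne n (hfix n)⟩,
    fun h => ⟨fun n => (h n).1, fun n _ => (h n).2⟩⟩

end TreeAut

section Bernoulli

open MeasureTheory

variable {X : Type*} [Fintype X]

theorem ncard_div_add_ncard_sdiff_div [Nonempty X] {S : Set (List X)} {k : ℕ}
    (hS : S ⊆ {w | w.length = k}) :
    (S.ncard : ℝ≥0∞) / (Fintype.card X : ℝ≥0∞) ^ k +
      ({w : List X | w.length = k} \ S).ncard / (Fintype.card X : ℝ≥0∞) ^ k = 1 := by
  rw [ENNReal.div_add_div_same, ← Nat.cast_add, add_comm,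
    Set.ncard_sdiff_add_ncard_of_subset hS (List.finite_length_eq X k), ncard_setOf_length_eq,
    Nat.cast_pow]
  exact ENNReal.div_self (pow_ne_zero _ (by simp)) (by simp)

variable [MeasurableSpace X] {μ : Measure (ℕ → X)}

theorem isProbabilityMeasure_of_measure_cylinder
    (hμ : ∀ w : List X, μ (cylinder w) = ((Fintype.card X : ℝ≥0∞))⁻¹ ^ w.length) :
    IsProbabilityMeasure μ :=
  ⟨by simpa [_root_.cylinder, prefixWord] using hμ []⟩

theorem measure_biUnion_cylinder_le
    (hμ : ∀ w : List X, μ (cylinder w) = ((Fintype.card X : ℝ≥0∞))⁻¹ ^ w.length)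
    {S : Set (List X)} {k : ℕ} (hS : S ⊆ {w | w.length = k}) :
    μ (⋃ w ∈ S, cylinder w) ≤ S.ncard / (Fintype.card X : ℝ≥0∞) ^ k := by
  have hfin : S.Finite := (List.finite_length_eq X k).subset hS
  calc μ (⋃ w ∈ S, cylinder w) = μ (⋃ w ∈ hfin.toFinset, cylinder w) := by simp
    _ ≤ ∑ w ∈ hfin.toFinset, μ (cylinder w) := measure_biUnion_finset_le _ _
    _ = S.ncard / (Fintype.card X : ℝ≥0∞) ^ k := by
      rw [Finset.sum_congr rfl fun w hw => by rw [hμ, hS (hfin.mem_toFinset.mp hw)],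
        Finset.sum_const, nsmul_eq_mul, ← Set.ncard_eq_toFinset_card S hfin, ← ENNReal.inv_pow,
        div_eq_mul_inv]

/-- `μ` is only a measure on the product σ-algebra of an arbitrary `MeasurableSpace X`, so
cylinders need not be measurable; unions of cylinders of one length are still null-measurable. -/
theorem measure_biUnion_cylinder [Nonempty X]
    (hμ : ∀ w : List X, μ (cylinder w) = ((Fintype.card X : ℝ≥0∞))⁻¹ ^ w.length)
    {S : Set (List X)} {k : ℕ} (hS : S ⊆ {w | w.length = k}) :
    μ (⋃ w ∈ S, cylinder w) = S.ncard / (Fintype.card X : ℝ≥0∞) ^ k ∧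
      NullMeasurableSet (⋃ w ∈ S, cylinder w) μ := by
  have := isProbabilityMeasure_of_measure_cylinder hμ
  set U := ⋃ w ∈ S, cylinder w
  have hU := measure_biUnion_cylinder_le hμ hS
  have hUc : μ Uᶜ ≤ ({w : List X | w.length = k} \ S).ncard / (Fintype.card X : ℝ≥0∞) ^ k :=
    (measure_mono (compl_biUnion_cylinder_subset S k)).trans
      (measure_biUnion_cylinder_le hμ sdiff_subset)
  have hsum := ncard_div_add_ncard_sdiff_div (X := X) hS
  have hcover : 1 ≤ μ U + μ Uᶜ := by
    rw [← measure_univ (μ := μ), ← union_compl_self U]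
    exact measure_union_le _ _
  have hne_top : ({w : List X | w.length = k} \ S).ncard / (Fintype.card X : ℝ≥0∞) ^ k ≠ ⊤ :=
    ne_top_of_le_ne_top ENNReal.one_ne_top (hsum ▸ le_add_self)
  refine ⟨le_antisymm hU ((ENNReal.add_le_add_iff_right hne_top).mp ?_),
    nullMeasurableSet_of_measure_add_measure_compl_le ?_⟩
  · exact hsum ▸ hcover.trans (add_le_add le_rfl hUc)
  · exact measure_univ (μ := μ) ▸ hsum ▸ add_le_add hU hUc

end Bernoulli

theorem boundary_of_fixSeq_eq_iInter_badCylinders_general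
    {X : Type*} [Fintype X] [TopologicalSpace X] [DiscreteTopology X]
    [MeasurableSpace X] (hX : 2 ≤ Fintype.card X)
    (φ : TreeAut X)
    (μ : Measure (ℕ → X))
    (hμ : ∀ w : List X, μ (cylinder w) = ((Fintype.card X : ℝ≥0∞))⁻¹ ^ w.length) :
    (∀ k : ℕ, φ.badCylinders (k + 1) ⊆ φ.badCylinders k) ∧
    (φ.fixSeq \ interior φ.fixSeq = ⋂ k : ℕ, φ.badCylinders k) ∧
    Tendsto (fun k : ℕ => ((φ.badWords k).ncard : ℝ≥0∞) / (Fintype.card X : ℝ≥0∞) ^ k)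
      atTop (nhds (μ (φ.fixSeq \ interior φ.fixSeq))) := by
  have : Nonempty X := Fintype.card_pos_iff.mp (by omega)
  have := isProbabilityMeasure_of_measure_cylinder hμ
  have hF (k : ℕ) := measure_biUnion_cylinder hμ (S := φ.badWords k) fun _ hw => hw.1
  refine ⟨φ.badCylinders_succ_subset, φ.fixSeq_diff_interior, ?_⟩
  rw [φ.fixSeq_diff_interior]
  exact (tendsto_measure_iInter_atTop (fun k => (hF k).2)
    (antitone_nat_of_succ_le φ.badCylinders_succ_subset) ⟨0, measure_ne_top μ _⟩).congr
    fun k => (hF k).1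

/-- Let `X` be finite with `|X| ≥ 2`, `φ` a finite-state automorphism of
`X*`, and `μ` the Bernoulli measure on `X^ℕ`.  With
`P_k = {w ∈ X^k : φ(w) = w, φ|_w ≠ id}` and `F_k = ⋃_{w ∈ P_k} wX^ℕ`, the sequence
`(F_k)` is decreasing, `Fix_φ \ interior Fix_φ = ⋂_k F_k`, and consequently
`μ(Fix_φ \ interior Fix_φ) = lim_k |P_k| / |X|^k`. -/
theorem boundary_of_fixSeq_eq_iInter_badCylinders
    {X : Type*} [Fintype X] [TopologicalSpace X] [DiscreteTopology X]
    [MeasurableSpace X] (hX : 2 ≤ Fintype.card X)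
    (φ : TreeAut X)
    (hfs : (Set.range fun w : List X => φ.restrict w).Finite)
    (μ : Measure (ℕ → X))
    (hμ : ∀ w : List X, μ (cylinder w) = ((Fintype.card X : ℝ≥0∞))⁻¹ ^ w.length) :
    (∀ k : ℕ, φ.badCylinders (k + 1) ⊆ φ.badCylinders k) ∧
    (φ.fixSeq \ interior φ.fixSeq = ⋂ k : ℕ, φ.badCylinders k) ∧
    Tendsto (fun k : ℕ => ((φ.badWords k).ncard : ℝ≥0∞) / (Fintype.card X : ℝ≥0∞) ^ k)
      atTop (nhds (μ (φ.fixSeq \ interior φ.fixSeq))) :=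
  boundary_of_fixSeq_eq_iInter_badCylinders_general hX φ μ hμ
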